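/- Let H be a real inner product space and let m₀ > 0, k₂ > 0, L > 0. Then there exists a constant C > 0 such that for all x, y ∈ H and all real numbers b ≥ 0 and c with ‖y‖ ≤ b: m₀‖x − y‖² + k₂ b² + L c² ≥ C(‖x‖² + ‖y‖² + b² + c²). (This is the core estimate establishing coercivity of the bilinear form for the single-crystal gradient plasticity model with isotropic hardening, where the constraint ‖y‖ ≤ b reflects that test functions satisfy |qᵅ| ≤ βᵅ.) -/

import Mathlib

/-! By the triangle inequality `‖x‖² ≤ 2‖x - y‖² + 2‖y‖²`, so under `‖y‖ ≤ b` the whole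
quantity `‖x‖² + ‖y‖² + b² + c²` is controlled by `2‖x - y‖² + 4b² + c²`; any
`C ≤ min (m₀ / 2) (k₂ / 4) L` then works. -/

section

variable {E : Type*} [SeminormedAddCommGroup E]

lemma norm_sq_le_two_mul_norm_sub_sq_add (x y : E) :
    ‖x‖ ^ 2 ≤ 2 * (‖x - y‖ ^ 2 + ‖y‖ ^ 2) :=
  calc ‖x‖ ^ 2 ≤ (‖x - y‖ + ‖y‖) ^ 2 := by
        gcongr
        simpa using norm_add_le (x - y) y
    _ ≤ 2 * (‖x - y‖ ^ 2 + ‖y‖ ^ 2) := add_sq_le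

lemma norm_sq_add_norm_sq_add_sq_add_sq_le (x y : E) {b : ℝ} (c : ℝ) (hyb : ‖y‖ ≤ b) :
    ‖x‖ ^ 2 + ‖y‖ ^ 2 + b ^ 2 + c ^ 2 ≤ 2 * ‖x - y‖ ^ 2 + 4 * b ^ 2 + c ^ 2 := by
  have hy : ‖y‖ ^ 2 ≤ b ^ 2 := by gcongr
  linarith [norm_sq_le_two_mul_norm_sub_sq_add x y]

end

theorem stmt_2_general (H : Type*) [NormedAddCommGroup H]
    (m₀ k₂ L : ℝ) (hm₀ : 0 < m₀) (hk₂ : 0 < k₂) (hL : 0 < L) :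
    ∃ C > 0, ∀ (x y : H) (b c : ℝ), 0 ≤ b → ‖y‖ ≤ b →
      m₀ * ‖x - y‖ ^ 2 + k₂ * b ^ 2 + L * c ^ 2 ≥
        C * (‖x‖ ^ 2 + ‖y‖ ^ 2 + b ^ 2 + c ^ 2) := by
  set C := min (m₀ / 2) (min (k₂ / 4) L)
  have hCm : C ≤ m₀ / 2 := min_le_left _ _
  have hCk : C ≤ k₂ / 4 := (min_le_right _ _).trans (min_le_left _ _)
  have hCL : C ≤ L := (min_le_right _ _).trans (min_le_right _ _)
  have hC : 0 < C := by positivity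
  refine ⟨C, hC, fun x y b c _ hyb => ?_⟩
  calc C * (‖x‖ ^ 2 + ‖y‖ ^ 2 + b ^ 2 + c ^ 2)
      ≤ C * (2 * ‖x - y‖ ^ 2 + 4 * b ^ 2 + c ^ 2) :=
        mul_le_mul_of_nonneg_left (norm_sq_add_norm_sq_add_sq_add_sq_le x y c hyb) hC.le
    _ = 2 * C * ‖x - y‖ ^ 2 + 4 * C * b ^ 2 + C * c ^ 2 := by ring
    _ ≤ m₀ * ‖x - y‖ ^ 2 + k₂ * b ^ 2 + L * c ^ 2 := by gcongr <;> linarith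

/-- Core coercivity estimate for the bilinear form of the single-crystal gradient
plasticity model with isotropic hardening: for `m₀, k₂, L > 0` there is `C > 0` such
that for all `x, y` in a real inner product space, all `b ≥ 0` with `‖y‖ ≤ b` and all
`c ∈ ℝ`, `m₀‖x − y‖² + k₂ b² + L c² ≥ C(‖x‖² + ‖y‖² + b² + c²)`. -/
theorem stmt_2 (H : Type*) [NormedAddCommGroup H] [InnerProductSpace ℝ H]
    (m₀ k₂ L : ℝ) (hm₀ : 0 < m₀) (hk₂ : 0 < k₂) (hL : 0 < L) :
    ∃ C > 0, ∀ (x y : H) (b c : ℝ), 0 ≤ b → ‖y‖ ≤ b →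
      m₀ * ‖x - y‖ ^ 2 + k₂ * b ^ 2 + L * c ^ 2 ≥
        C * (‖x‖ ^ 2 + ‖y‖ ^ 2 + b ^ 2 + c ^ 2) :=
  stmt_2_general H m₀ k₂ L hm₀ hk₂ hL
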